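/- Let O be a self-adjoint diagonally symmetric matrix on (ℂ^d)^{⊗n} and define the symmetric tensor W[O]_i = binom(n, γ(i)) ⟨i|O|i⟩. Then ⟨v^{⊗n}, O v^{⊗n}⟩ ≥ 0 for all v ∈ ℂ^d if and only if the polynomial p_{W[O]}(x) = Σ_{i∈[d]^n} W[O]_i x_{i_1}⋯x_{i_n} is non-negative on the non-negative orthant ℝ_+^d (i.e., W[O] is a copositive tensor). -/

import Mathlib

/-! Commuting with every diagonal phase `U^{⊗n}` forces `O i j = 0` unless `i` and `j` have the
same occupation vector, and `O Π = O` makes the row sum of `O` over the occupation class of `i`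
equal to `binom(n, γ(i)) · O i i`. Hence `O v^{⊗n}` is `v^{⊗n}` rescaled entrywise by
`binom(n, γ(i)) · O i i`, the quadratic form is `p_{W[O]}(|v|²)`, and `|v|²` ranges over all of
`ℝ₊^d`. -/

open ComplexOrder

/-- The permutation operator `P_σ` on `(ℂ^d)^{⊗ι}`, sending `|i⟩` to `|i ∘ σ⁻¹⟩`. -/
def permMatrix (ι : Type) [Fintype ι] [DecidableEq ι] (d : ℕ) (σ : Equiv.Perm ι) :
    Matrix (ι → Fin d) (ι → Fin d) ℂ :=
  Matrix.of fun a b => if a = (fun k => b (σ⁻¹ k)) then 1 else 0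

/-- The orthogonal projection `Π = (1/n!) ∑_σ P_σ` onto the symmetric subspace. -/
noncomputable def symProj (ι : Type) [Fintype ι] [DecidableEq ι] (d : ℕ) :
    Matrix (ι → Fin d) (ι → Fin d) ℂ :=
  ((Nat.factorial (Fintype.card ι) : ℂ))⁻¹ • ∑ σ : Equiv.Perm ι, permMatrix ι d σ

/-- A matrix is diagonally symmetric if it is supported on the symmetric subspace
(`Π X Π = X`) and commutes with `U^{⊗n}` for every diagonal unitary `U`. -/
def IsDS (ι : Type) [Fintype ι] [DecidableEq ι] (d : ℕ)
    (X : Matrix (ι → Fin d) (ι → Fin d) ℂ) : Prop :=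
  symProj ι d * X * symProj ι d = X ∧
  ∀ θ : Fin d → ℝ,
    Matrix.diagonal (fun i : ι → Fin d => ∏ k, Complex.exp ((θ (i k) : ℂ) * Complex.I)) * X =
      X * Matrix.diagonal fun i : ι → Fin d => ∏ k, Complex.exp ((θ (i k) : ℂ) * Complex.I)

/-- Merge an assignment on the complement of `A` with an assignment on `A` into a full
multi-index. -/
def merge {n d : ℕ} (A : Finset (Fin n)) (j : {k : Fin n // k ∉ A} → Fin d)
    (i : {k : Fin n // k ∈ A} → Fin d) : Fin n → Fin d :=
  fun k => if h : k ∈ A then i ⟨k, h⟩ else j ⟨k, h⟩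

/-- The occupation vector `γ(i)` of a multi-index `i`: `γ(i)_j = #{k : i k = j}`. -/
def occ {ι : Type} [Fintype ι] (d : ℕ) (i : ι → Fin d) : Fin d → ℕ :=
  fun j => (Finset.univ.filter fun k => i k = j).card

section Occupation

variable {ι : Type} [Fintype ι] {d : ℕ}

lemma occ_comp_perm (i : ι → Fin d) (σ : Equiv.Perm ι) : occ d (i ∘ σ) = occ d i := by
  funext a
  exact Finset.card_equiv σ (by simp)

lemma prod_comp_eq_prod_pow_occ {M : Type*} [CommMonoid M] (i : ι → Fin d) (f : Fin d → M) :
    ∏ k, f (i k) = ∏ a, f a ^ occ d i a := by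
  rw [← Finset.prod_fiberwise_of_maps_to (g := i) (fun x _ => Finset.mem_univ (i x))]
  refine Finset.prod_congr rfl fun a _ => ?_
  rw [Finset.prod_congr rfl fun k hk => by rw [(Finset.mem_filter.1 hk).2], Finset.prod_const]
  rfl

lemma sum_comp_eq_sum_occ_smul {M : Type*} [AddCommMonoid M] (i : ι → Fin d) (f : Fin d → M) :
    ∑ k, f (i k) = ∑ a, occ d i a • f a := by
  rw [← Finset.sum_fiberwise_of_maps_to (g := i) (fun x _ => Finset.mem_univ (i x))]
  refine Finset.sum_congr rfl fun a _ => ?_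
  rw [Finset.sum_congr rfl fun k hk => by rw [(Finset.mem_filter.1 hk).2], Finset.sum_const]
  rfl

lemma sum_occ (i : ι → Fin d) : ∑ a, occ d i a = Fintype.card ι := by
  simpa [smul_eq_mul] using (sum_comp_eq_sum_occ_smul i fun _ => (1 : ℕ)).symm

lemma exists_perm_comp_eq_of_occ_eq {i j : ι → Fin d} (h : occ d i = occ d j) :
    ∃ σ : Equiv.Perm ι, i ∘ σ = j := by
  have hcard (a : Fin d) : Fintype.card {k // j k = a} = Fintype.card {k // i k = a} := by
    simpa only [Fintype.card_subtype, occ] using (congrFun h a).symm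
  let e (a : Fin d) : {k // j k = a} ≃ {k // i k = a} := Fintype.equivOfCardEq (hcard a)
  refine ⟨(Equiv.sigmaFiberEquiv j).symm.trans
    ((Equiv.sigmaCongrRight e).trans (Equiv.sigmaFiberEquiv i)), funext fun k => ?_⟩
  exact (e (j k) ⟨k, rfl⟩).2

variable [DecidableEq ι]

lemma card_perm_comp_eq {i j : ι → Fin d} (h : occ d i = occ d j) :
    (Finset.univ.filter fun σ : Equiv.Perm ι => i ∘ σ = j).card = ∏ a, (occ d i a).factorial := by
  obtain ⟨σ₀, rfl⟩ := exists_perm_comp_eq_of_occ_eq h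
  have hstab := DomMulAct.stabilizer_card i
  rw [Fintype.card_subtype] at hstab
  calc (Finset.univ.filter fun σ : Equiv.Perm ι => i ∘ σ = i ∘ σ₀).card
      = (Finset.univ.filter fun τ : Equiv.Perm ι => i ∘ τ = i).card :=
        Finset.card_equiv (Equiv.mulRight σ₀⁻¹) fun σ => by
          simp only [Finset.mem_filter, Finset.mem_univ, true_and, funext_iff,
            Function.comp_apply, Equiv.coe_mulRight, Equiv.Perm.coe_mul]
          exact ⟨fun h x => by simpa using h (σ₀⁻¹ x), fun h x => by simpa using h (σ₀ x)⟩
    _ = ∏ a, (occ d i a).factorial := by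
      rw [hstab]
      exact Finset.prod_congr rfl fun a _ => by rw [Fintype.card_subtype]; rfl

end Occupation

section SymmetricProjector

variable {ι : Type} [Fintype ι] [DecidableEq ι] {d : ℕ}

lemma permMatrix_mul (σ τ : Equiv.Perm ι) :
    permMatrix ι d σ * permMatrix ι d τ = permMatrix ι d (σ * τ) := by
  ext a b
  simp only [Matrix.mul_apply, permMatrix, Matrix.of_apply, mul_ite, mul_one, mul_zero]
  rw [Finset.sum_ite_eq' Finset.univ (fun k => b (τ⁻¹ k))]
  simp [mul_inv_rev, Equiv.Perm.mul_apply, funext_iff]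

lemma mul_permMatrix_apply (X : Matrix (ι → Fin d) (ι → Fin d) ℂ) (σ : Equiv.Perm ι)
    (a b : ι → Fin d) : (X * permMatrix ι d σ) a b = X a (b ∘ ⇑σ⁻¹) := by
  simp only [Matrix.mul_apply, permMatrix, Matrix.of_apply, mul_ite, mul_one, mul_zero]
  exact Finset.sum_ite_eq' Finset.univ _ _ |>.trans (if_pos (Finset.mem_univ _))

lemma symProj_mul_self : symProj ι d * symProj ι d = symProj ι d := by
  have hP (σ : Equiv.Perm ι) :
      permMatrix ι d σ * ∑ τ, permMatrix ι d τ = ∑ τ : Equiv.Perm ι, permMatrix ι d τ := by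
    rw [Finset.mul_sum]
    exact Fintype.sum_equiv (Equiv.mulLeft σ) _ _ fun τ => permMatrix_mul σ τ
  have hN : (Nat.factorial (Fintype.card ι) : ℂ) ≠ 0 := Nat.cast_ne_zero.2 (Nat.factorial_ne_zero _)
  simp only [symProj, Matrix.smul_mul, Matrix.mul_smul, smul_smul, Finset.sum_mul, hP,
    Finset.sum_const, Finset.card_univ, Fintype.card_perm, ← Nat.cast_smul_eq_nsmul ℂ]
  congr 1
  field_simp

lemma IsDS.mul_symProj {X : Matrix (ι → Fin d) (ι → Fin d) ℂ} (hX : IsDS ι d X) :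
    X * symProj ι d = X := by
  conv_lhs => rw [← hX.1]
  rw [Matrix.mul_assoc (symProj ι d * X), symProj_mul_self, hX.1]

lemma factorial_mul_apply_eq_sum_perm {X : Matrix (ι → Fin d) (ι → Fin d) ℂ}
    (hX : X * symProj ι d = X) (i : ι → Fin d) :
    (Nat.factorial (Fintype.card ι) : ℂ) * X i i = ∑ σ : Equiv.Perm ι, X i (i ∘ σ) := by
  have hN : (Nat.factorial (Fintype.card ι) : ℂ) ≠ 0 := Nat.cast_ne_zero.2 (Nat.factorial_ne_zero _)
  conv_lhs => rw [← hX]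
  simp only [symProj, Matrix.mul_smul, Matrix.smul_apply, Matrix.mul_sum, Matrix.sum_apply,
    mul_permMatrix_apply, smul_eq_mul, ← mul_assoc, mul_inv_cancel₀ hN, one_mul]
  exact Fintype.sum_equiv (Equiv.inv _) _ _ fun σ => rfl

lemma sum_filter_occ_eq_apply {X : Matrix (ι → Fin d) (ι → Fin d) ℂ} (hX : X * symProj ι d = X)
    (i : ι → Fin d) :
    ∑ j ∈ Finset.univ.filter (fun j => occ d j = occ d i), X i j
      = (Nat.multinomial Finset.univ (occ d i) : ℂ) * X i i := by
  have hprod : ((∏ a, (occ d i a).factorial : ℕ) : ℂ) ≠ 0 :=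
    Nat.cast_ne_zero.2 (Finset.prod_ne_zero_iff.2 fun a _ => Nat.factorial_ne_zero _)
  have hspec : ((∏ a, (occ d i a).factorial : ℕ) : ℂ) * Nat.multinomial Finset.univ (occ d i)
      = Nat.factorial (Fintype.card ι) := by
    rw [← Nat.cast_mul, Nat.multinomial_spec, sum_occ]
  have hfib : ∑ σ : Equiv.Perm ι, X i (i ∘ σ)
      = ∑ j ∈ Finset.univ.filter (fun j => occ d j = occ d i),
          ((∏ a, (occ d i a).factorial : ℕ) : ℂ) * X i j := by
    rw [← Finset.sum_fiberwise_of_maps_to (g := fun σ : Equiv.Perm ι => i ∘ σ)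
      (t := Finset.univ.filter fun j => occ d j = occ d i)
      fun σ _ => Finset.mem_filter.2 ⟨Finset.mem_univ _, occ_comp_perm i σ⟩]
    refine Finset.sum_congr rfl fun j hj => ?_
    rw [Finset.sum_congr rfl fun σ hσ => by rw [(Finset.mem_filter.1 hσ).2], Finset.sum_const,
      card_perm_comp_eq (Finset.mem_filter.1 hj).2.symm, nsmul_eq_mul]
  apply mul_left_cancel₀ hprod
  rw [← mul_assoc, hspec, factorial_mul_apply_eq_sum_perm hX, hfib, Finset.mul_sum]

end SymmetricProjector

section Phases

open Complex

variable {ι : Type} [Fintype ι] {d : ℕ}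

lemma prod_exp_mul_I_eq (θ : Fin d → ℝ) (i : ι → Fin d) :
    ∏ k, exp ((θ (i k) : ℂ) * I) = exp ((∑ a, (occ d i a : ℂ) * θ a) * I) := by
  rw [← exp_sum, ← Finset.sum_mul, sum_comp_eq_sum_occ_smul i fun a => (θ a : ℂ)]
  simp only [nsmul_eq_mul]

lemma IsDS.apply_eq_zero_of_occ_ne [DecidableEq ι] {X : Matrix (ι → Fin d) (ι → Fin d) ℂ}
    (hX : IsDS ι d X) {i j : ι → Fin d} (hij : occ d i ≠ occ d j) : X i j = 0 := by
  obtain ⟨a₀, ha₀⟩ := Function.ne_iff.1 hij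
  have hgap : (occ d i a₀ : ℝ) - occ d j a₀ ≠ 0 := sub_ne_zero.2 (by exact_mod_cast ha₀)
  -- With phase `t` on `a₀`, the phases of the two sides at `(i, j)` differ by `e^{iπ} = -1`.
  set t : ℝ := Real.pi / ((occ d i a₀ : ℝ) - occ d j a₀)
  have hphase (w : ι → Fin d) :
      ∏ k, exp (((Pi.single a₀ t : Fin d → ℝ) (w k) : ℂ) * I)
        = exp ((occ d w a₀ * t : ℝ) * I) := by
    rw [prod_exp_mul_I_eq, Finset.sum_eq_single a₀ (fun b _ hb => by simp [hb]) (by simp)]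
    simp
  have hentry := congrFun (congrFun (hX.2 (Pi.single a₀ t)) i) j
  simp only [Matrix.diagonal_mul, Matrix.mul_diagonal, hphase] at hentry
  have hshift : exp ((occ d i a₀ * t : ℝ) * I) = -exp ((occ d j a₀ * t : ℝ) * I) := by
    have : (occ d i a₀ * t : ℝ) = occ d j a₀ * t + Real.pi := by
      simp only [t]
      field_simp
      ring
    rw [this, ofReal_add, add_mul, exp_add, exp_pi_mul_I, mul_neg_one]
  rw [hshift, neg_mul, mul_comm, neg_eq_iff_add_eq_zero, ← two_mul] at hentry
  simpa [exp_ne_zero] using hentry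

end Phases

section DickeBasis

variable {ι : Type} [Fintype ι] [DecidableEq ι] {d : ℕ}

lemma IsDS.mulVec_tensorPow_apply {X : Matrix (ι → Fin d) (ι → Fin d) ℂ} (hX : IsDS ι d X)
    (v : Fin d → ℂ) (i : ι → Fin d) :
    (X.mulVec fun j => ∏ k, v (j k)) i
      = (Nat.multinomial Finset.univ (occ d i) : ℂ) * X i i * ∏ k, v (i k) := by
  have hsupp : ∑ j, X i j * ∏ k, v (j k)
      = ∑ j ∈ Finset.univ.filter (fun j => occ d j = occ d i), X i j * ∏ k, v (j k) := by
    refine (Finset.sum_subset (Finset.filter_subset _ _) fun j _ hj => ?_).symm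
    have hij : occ d i ≠ occ d j := fun h => hj (Finset.mem_filter.2 ⟨Finset.mem_univ _, h.symm⟩)
    rw [hX.apply_eq_zero_of_occ_ne hij, zero_mul]
  have hprod {j : ι → Fin d} (hj : occ d j = occ d i) : ∏ k, v (j k) = ∏ k, v (i k) := by
    rw [prod_comp_eq_prod_pow_occ, prod_comp_eq_prod_pow_occ, hj]
  rw [Matrix.mulVec, dotProduct, hsupp,
    Finset.sum_congr rfl fun j hj => by rw [hprod (Finset.mem_filter.1 hj).2],
    ← Finset.sum_mul, sum_filter_occ_eq_apply hX.mul_symProj]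

lemma IsDS.sum_star_mul_mulVec_tensorPow {X : Matrix (ι → Fin d) (ι → Fin d) ℂ}
    (hX : IsDS ι d X) (v : Fin d → ℂ) :
    ∑ i, star (∏ k, v (i k)) * (X.mulVec fun j => ∏ k, v (j k)) i
      = ∑ i, (Nat.multinomial Finset.univ (occ d i) : ℂ) * X i i *
          ∏ k, ((Complex.normSq (v (i k)) : ℝ) : ℂ) := by
  refine Finset.sum_congr rfl fun i _ => ?_
  simp only [hX.mulVec_tensorPow_apply, ← Complex.mul_conj, Finset.prod_mul_distrib, star_prod,
    Complex.star_def]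
  ring

end DickeBasis

theorem stmt_14_general (n d : ℕ) (O : Matrix (Fin n → Fin d) (Fin n → Fin d) ℂ)
    (hDS : IsDS (Fin n) d O) :
    (∀ v : Fin d → ℂ,
        0 ≤ ∑ i : Fin n → Fin d,
          star (∏ k, v (i k)) * (O.mulVec fun j : Fin n → Fin d => ∏ k, v (j k)) i) ↔
      ∀ x : Fin d → ℝ, (∀ a, 0 ≤ x a) →
        0 ≤ ∑ i : Fin n → Fin d,
          ((Nat.multinomial Finset.univ (occ d i) : ℕ) : ℂ) * O i i *
            ∏ k, ((x (i k) : ℝ) : ℂ) := by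
  simp only [hDS.sum_star_mul_mulVec_tensorPow]
  constructor
  · intro h x hx
    convert h fun a => (Real.sqrt (x a) : ℂ) using 6 with i _ k
    rw [Complex.normSq_ofReal, Real.mul_self_sqrt (hx _)]
  · exact fun h v => h (fun a => Complex.normSq (v a)) fun a => Complex.normSq_nonneg _

/-- for a self-adjoint diagonally symmetric `O` with tensor
`W[O]_i = binom(n,γ(i))·⟨i|O|i⟩`, one has `⟨v^{⊗n}, O v^{⊗n}⟩ ≥ 0` for all `v ∈ ℂ^d` iff the
polynomial `p_{W[O]}(x) = ∑_i W[O]_i x_{i₁}⋯x_{i_n}` is non-negative on `ℝ₊^d`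
(`W[O]` is copositive). -/
theorem stmt_14 (n d : ℕ) (O : Matrix (Fin n → Fin d) (Fin n → Fin d) ℂ)
    (hherm : O.IsHermitian) (hDS : IsDS (Fin n) d O) :
    (∀ v : Fin d → ℂ,
        0 ≤ ∑ i : Fin n → Fin d,
          star (∏ k, v (i k)) * (O.mulVec fun j : Fin n → Fin d => ∏ k, v (j k)) i) ↔
      ∀ x : Fin d → ℝ, (∀ a, 0 ≤ x a) →
        0 ≤ ∑ i : Fin n → Fin d,
          ((Nat.multinomial Finset.univ (occ d i) : ℕ) : ℂ) * O i i *
            ∏ k, ((x (i k) : ℝ) : ℂ) :=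
  stmt_14_general n d O hDS
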